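/- arXiv:2101.09827 — 2 statements merged into one kernel-verified Lean document; each statement's English description precedes it below -/
import Mathlib

section
/- Let Z = {z₁, z₁′, …, z_m, z_m′} be a set of m general symmetric pairs of points in ℙ¹ × ℙ¹ over ℂ (where z′ denotes the reflection (y,x) of z = (x,y) across the diagonal). If (n,m) ≠ (1,2), then the linear system of divisors in |𝒪_{ℙ¹×ℙ¹}(1,n)| passing through all points of Z has the expected projective dimension, namely max(−1, 2n + 1 − 2m) (dimension −1 meaning the system is empty). -/
/-!
# Statement 9

Let `Z = {z₁, z₁′, …, z_m, z_m′}` be a set of `m` general symmetric pairs of points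
in `ℙ¹ × ℙ¹` over `ℂ` (where `z′` denotes the reflection `(y,x)` of `z = (x,y)`
across the diagonal).  If `(n,m) ≠ (1,2)`, then the linear system of divisors in
`|𝒪_{ℙ¹×ℙ¹}(1,n)|` passing through all points of `Z` has the expected projective
dimension `max (−1) (2n + 1 − 2m)`.

Concretely: global sections of `𝒪_{ℙ¹×ℙ¹}(1,n)` are the bihomogeneous polynomials
of bidegree `(1,n)` in the coordinates `(x₀,x₁)` of the first factor (the variables
`Sum.inl _`) and `(y₀,y₁)` of the second factor (the variables `Sum.inr _`).  A
point of `ℙ¹ × ℙ¹` is represented by a pair of nonzero vectors in `ℂ²`, and the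
linear system through the points is (the projectivization of) the subspace of such
forms vanishing at representatives of the points; its projective dimension is one
less than the `ℂ`-vector space dimension, so the expected projective dimension
`max (−1) (2n+1−2m)` means vector space dimension `max 0 (2n+2−2m)`.  "General" is
spelled out: a proper Zariski-closed subset of the configuration space
`(ℙ¹ × ℙ¹)^m` is contained in the zero locus of some nonzero polynomial `F` in the
homogeneous coordinates of the points, and the conclusion holds whenever
`F` does not vanish on the chosen representatives.
-/

noncomputable section

open MvPolynomial

/-- The bidegree weight on the coordinates of `ℙ¹ × ℙ¹`: the coordinates of the
first factor have weight `(1,0)`, those of the second factor weight `(0,1)`. -/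
def bidegWeight : (Fin 2 ⊕ Fin 2) → ℕ × ℕ :=
  Sum.elim (fun _ => (1, 0)) (fun _ => (0, 1))

/-- The space of bihomogeneous forms of bidegree `(1, n)`, i.e. the space of global
sections `H⁰(ℙ¹ × ℙ¹, 𝒪(1,n))`. -/
def bidegreeForms (n : ℕ) : Submodule ℂ (MvPolynomial (Fin 2 ⊕ Fin 2) ℂ) :=
  weightedHomogeneousSubmodule ℂ bidegWeight (1, n)

/-- The linear system (as a vector subspace) of forms of bidegree `(1,n)` on
`ℙ¹ × ℙ¹` vanishing at the `m` symmetric pairs of points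
`z i = ((z i).1, (z i).2)` and `(z i)′ = ((z i).2, (z i).1)`, the points being
given by nonzero homogeneous coordinate vectors in `ℂ²`. -/
def symmetricSystem (n : ℕ) {m : ℕ} (z : Fin m → ((Fin 2 → ℂ) × (Fin 2 → ℂ))) :
    Submodule ℂ (MvPolynomial (Fin 2 ⊕ Fin 2) ℂ) :=
  bidegreeForms n ⊓
    ⨅ i : Fin m,
      (LinearMap.ker ((aeval (Sum.elim (z i).1 (z i).2) :
          MvPolynomial (Fin 2 ⊕ Fin 2) ℂ →ₐ[ℂ] ℂ).toLinearMap) ⊓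
        LinearMap.ker ((aeval (Sum.elim (z i).2 (z i).1) :
          MvPolynomial (Fin 2 ⊕ Fin 2) ℂ →ₐ[ℂ] ℂ).toLinearMap))

/-!
The forms of bidegree `(1, n)` have the monomial basis `x_a y₀^(n-k) y₁^k`, so the linear system
has dimension `2n + 2 - r`, where `r` is the rank of the `2m × (2n + 2)` matrix of values of these
monomials at the points. A minor of this matrix is a polynomial `F` in the coordinates of the
points, and wherever `F` does not vanish the rank is at least the size of the minor; so it
suffices to find one configuration with a nonsingular minor of the maximal size
`min (2m) (2n + 2)`.

Take `z_i = ((1, ω^i), (1, 2ω^i))` with `ω` a primitive `μ`-th root of unity, `μ = min m (n + 1)`.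
On the pair `z_i, z_i′` the monomial `x_a y₁^k` takes the values `ω^(i(a+k))` times `2^k`
resp. `2^a`, so choosing for each residue `d` mod `μ` two columns with `a + k ≡ d` factors a
`2μ`-minor into a Vandermonde matrix in the `ω^i` and the blocks `[[2^k₀, 2^k₁], [1, 2]]`. These
are invertible as soon as `k₁ ≠ k₀ + 1`, which a suitable choice of columns achieves unless
`μ = 2` and `n = 1`; the remaining case `n = 1, m ≥ 3` is an explicit `4 × 4` determinant.
-/

namespace SymmetricInterpolation

open Module Finsupp

section Minors

variable {K : Type*} [Field K] {ι κ : Type*}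

def HasNonsingularMinor (A : Matrix ι κ K) (k : ℕ) : Prop :=
  ∃ (f : Fin k → ι) (g : Fin k → κ), (A.submatrix f g).det ≠ 0

lemma hasNonsingularMinor_zero (A : Matrix ι κ K) : HasNonsingularMinor A 0 :=
  ⟨Fin.elim0, Fin.elim0, by simp⟩

lemma hasNonsingularMinor_card {β : Type*} [Fintype β] [DecidableEq β] {A : Matrix ι κ K}
    (f : β → ι) (g : β → κ) (h : (A.submatrix f g).det ≠ 0) :
    HasNonsingularMinor A (Fintype.card β) := by
  let e := (Fintype.equivFin β).symm
  refine ⟨f ∘ e, g ∘ e, ?_⟩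
  rwa [← Matrix.submatrix_submatrix, Matrix.det_submatrix_equiv_self]

lemma HasNonsingularMinor.le_rank [Fintype κ] {A : Matrix ι κ K} {k : ℕ}
    (h : HasNonsingularMinor A k) : k ≤ A.rank := by
  obtain ⟨f, g, hdet⟩ := h
  calc k = (A.submatrix f g).rank := by
        rw [Matrix.rank_of_isUnit _ ((Matrix.isUnit_iff_isUnit_det _).mpr hdet.isUnit),
          Fintype.card_fin]
    _ ≤ A.rank := A.rank_submatrix_le f g

lemma HasNonsingularMinor.exists_ne_zero_forall_eval_ne_zero {σ : Type*}
    {P : Matrix ι κ (MvPolynomial σ K)} {x₀ : σ → K} {k : ℕ}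
    (h : HasNonsingularMinor (P.map (eval x₀)) k) :
    ∃ F : MvPolynomial σ K, F ≠ 0 ∧
      ∀ x, eval x F ≠ 0 → HasNonsingularMinor (P.map (eval x)) k := by
  obtain ⟨f, g, hdet⟩ := h
  have eval_det (x : σ → K) : eval x (P.submatrix f g).det = ((P.map (eval x)).submatrix f g).det :=
    RingHom.map_det _ _
  refine ⟨(P.submatrix f g).det, fun h0 => hdet ?_, fun x hx => ⟨f, g, ?_⟩⟩
  · rw [← eval_det, h0, map_zero]
  · rwa [← eval_det]

end Minors

lemma det_of_mul_blockwise {R ι κ : Type*} [CommRing R] [Fintype ι] [DecidableEq ι] [Fintype κ]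
    [DecidableEq κ] (V : Matrix ι ι R) (C : ι → Matrix κ κ R) :
    (Matrix.of fun p q : ι × κ => V p.1 q.1 * C q.1 p.2 q.2).det =
      V.det ^ Fintype.card κ * ∏ d, (C d).det := by
  have hfactor : (Matrix.of fun p q : ι × κ => V p.1 q.1 * C q.1 p.2 q.2) =
      Matrix.kroneckerMap (· * ·) V 1 *
        (Matrix.blockDiagonal C).submatrix (Equiv.prodComm ι κ) (Equiv.prodComm ι κ) := by
    ext ⟨i, ρ⟩ ⟨d, ε⟩
    simp [Matrix.mul_apply, Fintype.sum_prod_type, Matrix.one_apply, Matrix.blockDiagonal_apply]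
  rw [hfactor, Matrix.det_mul, Matrix.det_kronecker, Matrix.det_submatrix_equiv_self,
    Matrix.det_blockDiagonal, Matrix.det_one, one_pow, mul_one]

/-- The exponent of the monomial `x_a y₀^(n-k) y₁^k` indexed by `(a, k)`. -/
def bidegExponent (n : ℕ) (c : Fin 2 × Fin (n + 1)) : Fin 2 ⊕ Fin 2 →₀ ℕ :=
  single (Sum.inl c.1) 1 + single (Sum.inr 0) (n - c.2) + single (Sum.inr 1) (c.2 : ℕ)

lemma bidegExponent_injective (n : ℕ) : Function.Injective (bidegExponent n) := by
  intro c c' h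
  have h₁ := DFunLike.congr_fun h (Sum.inl c.1)
  have h₂ := DFunLike.congr_fun h (Sum.inr 1)
  simp only [bidegExponent, Finsupp.coe_add, Pi.add_apply, single_apply] at h₁ h₂
  refine Prod.ext ?_ (Fin.ext (by simpa using h₂))
  simpa [eq_comm] using h₁

lemma range_bidegExponent (n : ℕ) :
    Set.range (bidegExponent n) = {d | weight bidegWeight d = (1, n)} := by
  ext d
  have hweight : weight bidegWeight d =
      (d (Sum.inl 0) + d (Sum.inl 1), d (Sum.inr 0) + d (Sum.inr 1)) := by
    simp [weight_apply, Finsupp.sum_fintype, Fintype.sum_sum_type, bidegWeight, Prod.ext_iff]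
  simp only [Set.mem_range, Set.mem_ofPred_eq, hweight, Prod.ext_iff]
  constructor
  · rintro ⟨⟨a, k⟩, rfl⟩
    have := k.is_le
    fin_cases a <;> simp [bidegExponent] <;> omega
  · rintro ⟨hx, hy⟩
    refine ⟨(if d (Sum.inl 0) = 1 then 0 else 1, ⟨d (Sum.inr 1), by omega⟩), ?_⟩
    ext (b | b) <;> fin_cases b <;> split_ifs <;> simp [bidegExponent] <;> omega

lemma bidegreeForms_eq_span (n : ℕ) :
    bidegreeForms n = Submodule.span ℂ (Set.range fun c => monomial (bidegExponent n c) 1) := by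
  rw [bidegreeForms, weightedHomogeneousSubmodule_eq_finsupp_supported,
    AddMonoidAlgebra.supported_eq_span_single, ← range_bidegExponent, ← Set.range_comp]
  rfl

def bidegreeFormsBasis (n : ℕ) : Basis (Fin 2 × Fin (n + 1)) ℂ (bidegreeForms n) :=
  (Basis.span (((basisMonomials _ ℂ).linearIndependent.comp _
    (bidegExponent_injective n)))).map (LinearEquiv.ofEq _ _ (bidegreeForms_eq_span n).symm)

lemma coe_bidegreeFormsBasis (n : ℕ) (c : Fin 2 × Fin (n + 1)) :
    (bidegreeFormsBasis n c : MvPolynomial (Fin 2 ⊕ Fin 2) ℂ) = monomial (bidegExponent n c) 1 := by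
  rw [bidegreeFormsBasis, Basis.map_apply]
  exact (congrArg Subtype.val (Basis.span_apply _ c)).trans (by simp)

instance (n : ℕ) : FiniteDimensional ℂ (bidegreeForms n) :=
  (bidegreeFormsBasis n).finiteDimensional_of_finite

lemma finrank_bidegreeForms (n : ℕ) : finrank ℂ (bidegreeForms n) = 2 * n + 2 := by
  rw [finrank_eq_card_basis (bidegreeFormsBasis n)]
  simp [Fintype.card_prod]
  ring

lemma eval_monomial_bidegExponent (n : ℕ) (c : Fin 2 × Fin (n + 1)) (p : Fin 2 ⊕ Fin 2 → ℂ) :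
    eval p (monomial (bidegExponent n c) 1) =
      p (Sum.inl c.1) * p (Sum.inr 0) ^ (n - c.2) * p (Sum.inr 1) ^ (c.2 : ℕ) := by
  simp only [bidegExponent, eval_monomial, one_mul]
  rw [prod_add_index' (fun _ => pow_zero _) (fun _ _ _ => pow_add _ _ _),
    prod_add_index' (fun _ => pow_zero _) (fun _ _ _ => pow_add _ _ _)]
  simp

variable {m : ℕ}

/-- The coordinates of the `2m` points: row `(i, 0)` is `z i` and row `(i, 1)` its reflection. -/
def symPoint (z : Fin m → (Fin 2 → ℂ) × (Fin 2 → ℂ)) (r : Fin m × Fin 2) : Fin 2 ⊕ Fin 2 → ℂ :=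
  if r.2 = 0 then Sum.elim (z r.1).1 (z r.1).2 else Sum.elim (z r.1).2 (z r.1).1

def evalMap (n : ℕ) (z : Fin m → (Fin 2 → ℂ) × (Fin 2 → ℂ)) :
    bidegreeForms n →ₗ[ℂ] (Fin m × Fin 2 → ℂ) :=
  LinearMap.pi fun r => (aeval (symPoint z r)).toLinearMap ∘ₗ (bidegreeForms n).subtype

lemma symmetricSystem_eq_map_ker (n : ℕ) (z : Fin m → (Fin 2 → ℂ) × (Fin 2 → ℂ)) :
    symmetricSystem n z = (LinearMap.ker (evalMap n z)).map (bidegreeForms n).subtype := by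
  ext p
  simp only [symmetricSystem, Submodule.mem_inf, Submodule.mem_iInf, LinearMap.mem_ker,
    AlgHom.toLinearMap_apply, Submodule.mem_map, funext_iff, Prod.forall, Fin.forall_fin_two]
  constructor
  · rintro ⟨hp, hz⟩
    exact ⟨⟨p, hp⟩, fun i => by simpa [evalMap, symPoint] using hz i, rfl⟩
  · rintro ⟨⟨q, hq⟩, hz, rfl⟩
    exact ⟨hq, fun i => by simpa [evalMap, symPoint] using hz i⟩

def evalMatrix (n : ℕ) (z : Fin m → (Fin 2 → ℂ) × (Fin 2 → ℂ)) :
    Matrix (Fin m × Fin 2) (Fin 2 × Fin (n + 1)) ℂ :=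
  Matrix.of fun r c => eval (symPoint z r) (monomial (bidegExponent n c) 1)

lemma toMatrix_evalMap (n : ℕ) (z : Fin m → (Fin 2 → ℂ) × (Fin 2 → ℂ)) :
    LinearMap.toMatrix (bidegreeFormsBasis n) (Pi.basisFun ℂ _) (evalMap n z) = evalMatrix n z := by
  ext r c
  simp [LinearMap.toMatrix_apply, evalMap, evalMatrix, coe_bidegreeFormsBasis]

lemma finrank_symmetricSystem_add_rank (n : ℕ) (z : Fin m → (Fin 2 → ℂ) × (Fin 2 → ℂ)) :
    finrank ℂ (symmetricSystem n z) + (evalMatrix n z).rank = 2 * n + 2 := by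
  rw [symmetricSystem_eq_map_ker, Submodule.finrank_map_subtype_eq, ← toMatrix_evalMap,
    Matrix.rank_eq_finrank_range_toLin _ (Pi.basisFun ℂ _) (bidegreeFormsBasis n),
    Matrix.toLin_toMatrix, add_comm, LinearMap.finrank_range_add_finrank_ker,
    finrank_bidegreeForms]

def symVar (r : Fin m × Fin 2) (v : Fin 2 ⊕ Fin 2) : Fin m × (Fin 2 ⊕ Fin 2) :=
  (r.1, if r.2 = 0 then v else v.swap)

def genericMatrix (n m : ℕ) :
    Matrix (Fin m × Fin 2) (Fin 2 × Fin (n + 1)) (MvPolynomial (Fin m × (Fin 2 ⊕ Fin 2)) ℂ) :=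
  Matrix.of fun r c => rename (symVar r) (monomial (bidegExponent n c) 1)

lemma genericMatrix_map_eval (n : ℕ) (z : Fin m → (Fin 2 → ℂ) × (Fin 2 → ℂ)) :
    (genericMatrix n m).map (eval fun p => Sum.elim (z p.1).1 (z p.1).2 p.2) = evalMatrix n z := by
  ext ⟨i, ρ⟩ c
  simp only [genericMatrix, evalMatrix, Matrix.map_apply, Matrix.of_apply, eval_rename]
  congr 2
  funext v
  fin_cases ρ <;> rcases v with v | v <;> simp [symVar, symPoint]

def scaledPair (t : ℂ) : (Fin 2 → ℂ) × (Fin 2 → ℂ) := (![1, t], ![1, 2 * t])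

lemma evalMatrix_scaledPair (n : ℕ) (t : Fin m → ℂ) (r : Fin m × Fin 2) (c : Fin 2 × Fin (n + 1)) :
    evalMatrix n (fun i => scaledPair (t i)) r c =
      2 ^ (if r.2 = 0 then (c.2 : ℕ) else c.1) * t r.1 ^ ((c.1 : ℕ) + c.2) := by
  obtain ⟨i, ρ⟩ := r
  obtain ⟨a, k⟩ := c
  rw [evalMatrix, Matrix.of_apply, eval_monomial_bidegExponent]
  fin_cases ρ <;> fin_cases a <;> simp [symPoint, scaledPair] <;> ring

lemma hasNonsingularMinor_evalMatrix_rootsOfUnity (n : ℕ) {μ : ℕ} (hμm : μ ≤ m) {ω : ℂ}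
    (hω : IsPrimitiveRoot ω μ) (k : Fin 2 → Fin μ → Fin (n + 1))
    (hk : ∀ (ε : Fin 2) d, (ε : ℕ) + k ε d ≡ d [MOD μ]) (hk' : ∀ d, (k 0 d : ℕ) + 1 ≠ k 1 d) :
    HasNonsingularMinor (evalMatrix n fun i : Fin m => scaledPair (ω ^ (i : ℕ))) (2 * μ) := by
  let C : Fin μ → Matrix (Fin 2) (Fin 2) ℂ :=
    fun d => Matrix.of fun ρ ε => 2 ^ (if ρ = 0 then (k ε d : ℕ) else ε)
  have hminor : (evalMatrix n fun i : Fin m => scaledPair (ω ^ (i : ℕ))).submatrix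
      (fun p : Fin μ × Fin 2 => (Fin.castLE hμm p.1, p.2))
      (fun q : Fin μ × Fin 2 => (q.2, k q.2 q.1)) =
      Matrix.of fun p q =>
        Matrix.vandermonde (fun i : Fin μ => ω ^ (i : ℕ)) p.1 q.1 * C q.1 p.2 q.2 := by
    ext ⟨i, ρ⟩ ⟨d, ε⟩
    simp only [Matrix.submatrix_apply, evalMatrix_scaledPair, Matrix.of_apply,
      Matrix.vandermonde_apply, C, Fin.val_castLE]
    rw [mul_comm, ← pow_mul, ← pow_mul, pow_eq_pow_of_modEq ((hk ε d).mul_left i) hω.pow_eq_one]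
  have hV : (Matrix.vandermonde fun i : Fin μ => ω ^ (i : ℕ)).det ≠ 0 :=
    Matrix.det_vandermonde_ne_zero_iff.mpr fun i j hij => Fin.ext (hω.pow_inj i.2 j.2 hij)
  have hC (d : Fin μ) : (C d).det ≠ 0 := by
    have : (2 : ℂ) ^ ((k 0 d : ℕ) + 1) ≠ 2 ^ (k 1 d : ℕ) := by
      exact_mod_cast (Nat.pow_right_injective le_rfl).ne (hk' d)
    simpa [Matrix.det_fin_two, C, pow_succ, sub_eq_zero] using this
  have hdet := hasNonsingularMinor_card _ _ <| by
    rw [hminor, det_of_mul_blockwise]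
    exact mul_ne_zero (pow_ne_zero _ hV) (Finset.prod_ne_zero_iff.mpr fun d _ => hC d)
  simpa [mul_comm] using hdet

lemma exists_columns {μ n : ℕ} (hμ0 : 0 < μ) (hμn : μ ≤ n + 1) (hμ2 : μ = 2 → 2 ≤ n) :
    ∃ k : Fin 2 → Fin μ → Fin (n + 1),
      (∀ (ε : Fin 2) d, (ε : ℕ) + k ε d ≡ d [MOD μ]) ∧ ∀ d, (k 0 d : ℕ) + 1 ≠ k 1 d := by
  by_cases h2 : μ = 2
  · subst h2
    have hn := hμ2 rfl
    refine ⟨![![⟨2, by omega⟩, ⟨1, by omega⟩], ![⟨1, by omega⟩, ⟨0, by omega⟩]], ?_, ?_⟩ <;>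
      simp [Fin.forall_fin_two, Nat.ModEq]
  · set b := n + 1 - μ
    -- `(μ - 1) * (b + ε) ≡ -(b + ε)`, so `k ε d` is the representative of `d - ε` in `[b, n]`.
    let k : Fin 2 → Fin μ → Fin (n + 1) := fun ε d =>
      ⟨b + (d + (μ - 1) * (b + ε)) % μ, by have := Nat.mod_lt (d + (μ - 1) * (b + ε)) hμ0; omega⟩
    have hk (ε : Fin 2) (d : Fin μ) : (ε : ℕ) + k ε d ≡ d [MOD μ] :=
      calc (ε : ℕ) + (b + (d + (μ - 1) * (b + ε)) % μ)
          ≡ ε + (b + (d + (μ - 1) * (b + ε))) [MOD μ] :=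
            ((Nat.mod_modEq _ _).add_left _).add_left _
        _ = d + μ * (b + ε) := by
            obtain ⟨ν, rfl⟩ := Nat.exists_eq_add_of_lt hμ0
            simp only [zero_add, Nat.add_sub_cancel]
            ring
        _ ≡ d [MOD μ] := by simp [Nat.ModEq, Nat.add_mul_mod_self_left]
    refine ⟨k, hk, fun d hd => ?_⟩
    have h0 := hk 0 d
    have h1 := hk 1 d
    simp only [Fin.val_zero, Fin.val_one, zero_add, ← hd] at h0 h1
    have htwo : 2 ≡ 0 [MOD μ] := Nat.ModEq.add_left_cancel' (k 0 d : ℕ) <| by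
      rw [add_zero, add_comm, show 2 + (k 0 d : ℕ) = 1 + (k 0 d + 1) by ring]
      exact h1.trans h0.symm
    have hdvd : μ ∣ 2 := Nat.modEq_zero_iff_dvd.mp htwo
    obtain rfl : μ = 1 := by have := Nat.le_of_dvd two_pos hdvd; omega
    simp [k] at hd

lemma hasNonsingularMinor_evalMatrix_one (hm : 3 ≤ m) :
    HasNonsingularMinor (evalMatrix 1 fun i : Fin m => scaledPair ((i : ℕ) + 1)) 4 := by
  refine ⟨![(⟨0, by omega⟩, 0), (⟨0, by omega⟩, 1), (⟨1, by omega⟩, 0), (⟨2, by omega⟩, 0)],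
    ![(0, 0), (0, 1), (1, 0), (1, 1)], ?_⟩
  have hminor : (evalMatrix 1 fun i : Fin m => scaledPair ((i : ℕ) + 1)).submatrix
      ![(⟨0, by omega⟩, 0), (⟨0, by omega⟩, 1), (⟨1, by omega⟩, 0), (⟨2, by omega⟩, 0)]
      ![(0, 0), (0, 1), (1, 0), (1, 1)] =
      !![1, 2, 1, 2; 1, 1, 2, 2; 1, 4, 2, 8; 1, 6, 3, 18] := by
    ext i j
    fin_cases i <;> fin_cases j <;> norm_num [evalMatrix_scaledPair]
  rw [hminor, Matrix.det_succ_row_zero]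
  simp [Fin.sum_univ_succ, Matrix.det_fin_three, Fin.succAbove]
  norm_num

lemma exists_hasNonsingularMinor_evalMatrix {n : ℕ} (hnm : (n, m) ≠ (1, 2)) :
    ∃ z : Fin m → (Fin 2 → ℂ) × (Fin 2 → ℂ),
      HasNonsingularMinor (evalMatrix n z) (min (2 * m) (2 * n + 2)) := by
  simp only [ne_eq, Prod.mk.injEq, not_and] at hnm
  rcases Nat.eq_zero_or_pos m with rfl | hm
  · exact ⟨Fin.elim0, by simpa using hasNonsingularMinor_zero _⟩
  by_cases hn1 : n = 1 ∧ 3 ≤ m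
  · obtain ⟨rfl, hm3⟩ := hn1
    rw [show min (2 * m) (2 * 1 + 2) = 4 by omega]
    exact ⟨_, hasNonsingularMinor_evalMatrix_one hm3⟩
  set μ := min m (n + 1)
  obtain ⟨k, hk, hk'⟩ := exists_columns (μ := μ) (n := n) (by omega) (by omega) (by omega)
  rw [show min (2 * m) (2 * n + 2) = 2 * μ by omega]
  exact ⟨_, hasNonsingularMinor_evalMatrix_rootsOfUnity n (min_le_left _ _)
    (Complex.isPrimitiveRoot_exp μ (by omega)) k hk hk'⟩

end SymmetricInterpolation

/-- For `(n,m) ≠ (1,2)` and `m` general symmetric pairs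
`z₁, z₁′, …, z_m, z_m′` of points of `ℙ¹ × ℙ¹`, the linear system of divisors in
`|𝒪(1,n)|` through all of these points has the expected projective dimension
`max (−1) (2n + 1 − 2m)`, i.e. the space of forms of bidegree `(1,n)` vanishing at
the points has vector space dimension `max 0 (2n + 2 − 2m)`. -/
theorem symmetric_interpolation_dimension (n m : ℕ) (hnm : (n, m) ≠ (1, 2)) :
    ∃ F : MvPolynomial (Fin m × (Fin 2 ⊕ Fin 2)) ℂ, F ≠ 0 ∧
      ∀ z : Fin m → ((Fin 2 → ℂ) × (Fin 2 → ℂ)),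
        (∀ i, (z i).1 ≠ 0 ∧ (z i).2 ≠ 0) →
        MvPolynomial.eval (fun p => Sum.elim (z p.1).1 (z p.1).2 p.2) F ≠ 0 →
        (Module.finrank ℂ ↥(symmetricSystem n z) : ℤ) =
          max 0 (2 * (n : ℤ) + 2 - 2 * (m : ℤ)) := by
  obtain ⟨z₀, hz₀⟩ := SymmetricInterpolation.exists_hasNonsingularMinor_evalMatrix (n := n) hnm
  rw [← SymmetricInterpolation.genericMatrix_map_eval] at hz₀
  obtain ⟨F, hF0, hF⟩ := hz₀.exists_ne_zero_forall_eval_ne_zero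
  refine ⟨F, hF0, fun z _ hz => ?_⟩
  have hrank := (hF _ hz).le_rank
  rw [SymmetricInterpolation.genericMatrix_map_eval] at hrank
  have hsum := SymmetricInterpolation.finrank_symmetricSystem_add_rank n z
  have hheight := (SymmetricInterpolation.evalMatrix n z).rank_le_card_height
  have hwidth := (SymmetricInterpolation.evalMatrix n z).rank_le_card_width
  simp only [Fintype.card_prod, Fintype.card_fin] at hheight hwidth
  omega

end
end

section
/- Let Z = {z₁, z₁′, …, z_m, z_m′} be a set of m general symmetric pairs of points in ℙ¹ × ℙ¹ over ℂ, and let r be a nonnegative integer. If (n,m) ≠ (1,2), then the linear system of divisors in |𝒪_{ℙ¹×ℙ¹}(1,n)| passing through all points of Z and through r further general points of ℙ¹ × ℙ¹ has the expected projective dimension max(−1, 2n + 1 − 2m − r). -/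
/-!
# Statement 10

Let `Z = {z₁, z₁′, …, z_m, z_m′}` be a set of `m` general symmetric pairs of points
in `ℙ¹ × ℙ¹` over `ℂ`, and let `r` be a nonnegative integer.  If `(n,m) ≠ (1,2)`,
then the linear system of divisors in `|𝒪_{ℙ¹×ℙ¹}(1,n)|` passing through all points
of `Z` and through `r` further general points of `ℙ¹ × ℙ¹` has the expected
projective dimension `max (−1) (2n + 1 − 2m − r)`.

Concretely: global sections of `𝒪_{ℙ¹×ℙ¹}(1,n)` are the bihomogeneous polynomials
of bidegree `(1,n)` in the coordinates `(x₀,x₁)` of the first factor (the variables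
`Sum.inl _`) and `(y₀,y₁)` of the second factor (the variables `Sum.inr _`).  A
point of `ℙ¹ × ℙ¹` is represented by a pair of nonzero vectors in `ℂ²`, and the
linear system through the points is (the projectivization of) the subspace of such
forms vanishing at representatives of the points; its projective dimension is one
less than the `ℂ`-vector space dimension, so the expected projective dimension
`max (−1) (2n+1−2m−r)` means vector space dimension `max 0 (2n+2−2m−r)`.
"General" is spelled out: a proper Zariski-closed subset of the configuration space
`(ℙ¹ × ℙ¹)^m × (ℙ¹ × ℙ¹)^r` is contained in the zero locus of some nonzero
polynomial `F` in the homogeneous coordinates of all the points, and the conclusion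
holds whenever `F` does not vanish on the chosen representatives.
-/

noncomputable section

open MvPolynomial

/-- The linear system (as a vector subspace) of forms of bidegree `(1,n)` on
`ℙ¹ × ℙ¹` vanishing at the `m` symmetric pairs of points `z i`, `(z i)′` and at the
`r` further points `w j`. -/
def symmetricSystemWithPoints (n : ℕ) {m r : ℕ}
    (z : Fin m → ((Fin 2 → ℂ) × (Fin 2 → ℂ)))
    (w : Fin r → ((Fin 2 → ℂ) × (Fin 2 → ℂ))) :
    Submodule ℂ (MvPolynomial (Fin 2 ⊕ Fin 2) ℂ) :=
  symmetricSystem n z ⊓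
    ⨅ j : Fin r,
      LinearMap.ker ((aeval (Sum.elim (w j).1 (w j).2) :
        MvPolynomial (Fin 2 ⊕ Fin 2) ℂ →ₐ[ℂ] ℂ).toLinearMap)

/-!
The forms of bidegree `(1, n)` have the monomial basis `x_e y₀^(n-j) y₁^j`, so the dimension of
the system is `2n + 2` minus the rank of the matrix of values of these monomials at the `2m + r`
points; it is the expected one as soon as one fixed maximal minor does not vanish. That minor is a
polynomial `F` in the coordinates of the configuration, and `F ≠ 0` because it is a nonzero
Vandermonde determinant at a special configuration.

At the point `((1, t^(n+1)), (1, t))` the monomials take the values `t^((n+1)e + j)`, i.e. the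
powers `t^0, …, t^(2n+1)`. If `t = ζ^((n+1)x + y)` for a primitive `n(n+2)`-th root of unity
`ζ`, the reflected point is of the same shape with parameter `ζ^((n+1)y + x)`: as
`(n+1)² ≡ 1 mod n(n+2)`, reflection swaps the base-`(n+1)` digits of the exponent. The pairs both
of whose points enter the minor are therefore given the digit pairs `(k, k+1 mod n+1)`, the edges
of an `(n+1)`-cycle, and all other points the distinct real parameters `2 + t`. All parameters are
then distinct, unless `n = 1` and two such pairs are needed. For `n = 0` the shape degenerates and
the pairs are given distinct real coordinates directly.
-/

section LinearAlgebra

open Module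

variable {K M ι β : Type*} [Field K] [AddCommGroup M] [Module K M] [Fintype ι] [Fintype β]

theorem Matrix.rank_eq_of_det_submatrix_ne_zero {s : ℕ} (A : Matrix ι β K) (ρ : Fin s → ι)
    (κ : Fin s → β) (hdet : (A.submatrix ρ κ).det ≠ 0)
    (hs : min (Fintype.card ι) (Fintype.card β) ≤ s) : A.rank = s := by
  have hminor : (A.submatrix ρ κ).rank = s := by
    rw [Matrix.rank_of_isUnit _ ((Matrix.isUnit_iff_isUnit_det _).mpr hdet.isUnit),
      Fintype.card_fin]
  refine le_antisymm (le_trans ?_ hs) (hminor ▸ A.rank_submatrix_le ρ κ)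
  exact le_min A.rank_le_card_height A.rank_le_card_width

theorem finrank_inf_iInf_ker_eq_card_sub_rank [DecidableEq β] (V : Submodule K M)
    (b : Basis β K V) (L : ι → M →ₗ[K] K) :
    finrank K ↥(V ⊓ ⨅ t, LinearMap.ker (L t)) =
      Fintype.card β - (Matrix.of fun t j => L t (b j)).rank := by
  let Φ : V →ₗ[K] ι → K := LinearMap.pi fun t => L t ∘ₗ V.subtype
  have hker : V ⊓ ⨅ t, LinearMap.ker (L t) = (LinearMap.ker Φ).map V.subtype := by
    ext x
    simp [Φ, funext_iff, and_comm]
  have hmatrix : LinearMap.toMatrix b (Pi.basisFun K ι) Φ = Matrix.of fun t j => L t (b j) := by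
    ext t j
    simp [Φ, LinearMap.toMatrix_apply]
  have : FiniteDimensional K V := b.finiteDimensional_of_finite
  rw [hker, Submodule.finrank_map_subtype_eq, ← hmatrix,
    Matrix.rank_eq_finrank_range_toLin _ (Pi.basisFun K ι) b, Matrix.toLin_toMatrix,
    ← finrank_eq_card_basis b, ← Φ.finrank_range_add_finrank_ker]
  omega

end LinearAlgebra

theorem Nat.eq_and_eq_of_mul_add_eq_mul_add {q a b c d : ℕ} (hb : b < q) (hd : d < q)
    (h : q * a + b = q * c + d) : a = c ∧ b = d := by
  have hdiv := congrArg (· / q) h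
  have hmod := congrArg (· % q) h
  simp only [Nat.mul_add_div (by omega : q > 0), Nat.div_eq_of_lt hb, Nat.div_eq_of_lt hd,
    Nat.mul_add_mod, Nat.mod_eq_of_lt hb, Nat.mod_eq_of_lt hd] at hdiv hmod
  omega

namespace BidegreeInterpolation

open Module

lemma weight_bidegWeight (d : Fin 2 ⊕ Fin 2 →₀ ℕ) :
    Finsupp.weight bidegWeight d = (d (.inl 0) + d (.inl 1), d (.inr 0) + d (.inr 1)) := by
  rw [Finsupp.weight_apply, Finsupp.sum_fintype _ _ (by simp), Fintype.sum_sum_type]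
  simp [Fin.sum_univ_two, bidegWeight]

def bidegreeExponent (n : ℕ) (x : Fin 2 × Fin (n + 1)) : Fin 2 ⊕ Fin 2 →₀ ℕ :=
  Finsupp.single (Sum.inl x.1) 1 + Finsupp.single (Sum.inr 0) (n - (x.2 : ℕ)) +
    Finsupp.single (Sum.inr 1) (x.2 : ℕ)

lemma bidegreeExponent_injective (n : ℕ) : Function.Injective (bidegreeExponent n) := by
  rintro ⟨e, j⟩ ⟨e', j'⟩ h
  have he := DFunLike.congr_fun h (.inl e)
  have hj := DFunLike.congr_fun h (.inr 1)
  simp [bidegreeExponent, Finsupp.single_apply] at he hj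
  exact Prod.ext he.symm (Fin.ext hj)

lemma range_bidegreeExponent (n : ℕ) :
    Set.range (bidegreeExponent n) = {d | Finsupp.weight bidegWeight d = (1, n)} := by
  ext d
  simp only [Set.mem_range, Set.mem_ofPred_eq, weight_bidegWeight, Prod.ext_iff]
  constructor
  · rintro ⟨⟨e, j⟩, rfl⟩
    have := j.isLt
    fin_cases e <;> simp [bidegreeExponent] <;> omega
  · rintro ⟨h1, h2⟩
    refine ⟨(if d (.inl 0) = 1 then 0 else 1, ⟨d (.inr 1), by omega⟩), ?_⟩
    ext (i | i) <;> fin_cases i <;> split_ifs <;>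
      simp [bidegreeExponent] <;> omega

def bidegreeMonomial (n : ℕ) (x : Fin 2 × Fin (n + 1)) : MvPolynomial (Fin 2 ⊕ Fin 2) ℂ :=
  monomial (bidegreeExponent n x) 1

lemma bidegreeMonomial_eq (n : ℕ) (x : Fin 2 × Fin (n + 1)) :
    bidegreeMonomial n x =
      X (Sum.inl x.1) * X (Sum.inr 0) ^ (n - (x.2 : ℕ)) * X (Sum.inr 1) ^ (x.2 : ℕ) := by
  rw [X_pow_eq_monomial, X_pow_eq_monomial, X, monomial_mul, monomial_mul, bidegreeMonomial,
    bidegreeExponent]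
  simp

lemma eval_bidegreeMonomial (n : ℕ) (x : Fin 2 × Fin (n + 1)) (u v : Fin 2 → ℂ) :
    eval (Sum.elim u v) (bidegreeMonomial n x) = u x.1 * v 0 ^ (n - x.2) * v 1 ^ (x.2 : ℕ) := by
  simp [bidegreeMonomial_eq]

lemma bidegreeForms_eq_span (n : ℕ) :
    bidegreeForms n = Submodule.span ℂ (Set.range (bidegreeMonomial n)) := by
  rw [bidegreeForms, weightedHomogeneousSubmodule_eq_finsupp_supported, ← range_bidegreeExponent]
  exact (restrictSupport_eq_span ℂ _).trans (by rw [← Set.range_comp]; rfl)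

lemma linearIndependent_bidegreeMonomial (n : ℕ) :
    LinearIndependent ℂ (bidegreeMonomial n) := by
  have h := (basisMonomials _ ℂ).linearIndependent.comp _ (bidegreeExponent_injective n)
  rwa [coe_basisMonomials] at h

def bidegreeBasis (n : ℕ) : Basis (Fin 2 × Fin (n + 1)) ℂ (bidegreeForms n) :=
  (Basis.span (linearIndependent_bidegreeMonomial n)).map
    (LinearEquiv.ofEq _ _ (bidegreeForms_eq_span n).symm)

lemma coe_bidegreeBasis (n : ℕ) (x : Fin 2 × Fin (n + 1)) :
    (bidegreeBasis n x : MvPolynomial (Fin 2 ⊕ Fin 2) ℂ) = bidegreeMonomial n x := by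
  simp [bidegreeBasis, Basis.span_apply]

abbrev Point := (Fin 2 → ℂ) × (Fin 2 → ℂ)

def coords (p : Point) : Fin 2 ⊕ Fin 2 → ℂ := Sum.elim p.1 p.2

lemma coords_swap (p : Point) : coords p.swap = coords p ∘ Sum.swap := by
  ext (i | i) <;> rfl

def interpolationPoints {m r : ℕ} (z : Fin m → Point) (w : Fin r → Point) :
    Fin (m + r + m) → Point :=
  Fin.append (Fin.append z w) (Prod.swap ∘ z)

lemma symmetricSystemWithPoints_eq (n : ℕ) {m r : ℕ} (z : Fin m → Point)
    (w : Fin r → Point) :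
    symmetricSystemWithPoints n z w = bidegreeForms n ⊓
      ⨅ t, LinearMap.ker (aeval (coords (interpolationPoints z w t))).toLinearMap := by
  ext q
  simp only [symmetricSystemWithPoints, symmetricSystem, Submodule.mem_inf, Submodule.mem_iInf,
    LinearMap.mem_ker, AlgHom.toLinearMap_apply, Fin.forall_fin_add, interpolationPoints,
    Fin.append_left, Fin.append_right, Function.comp_apply, coords, Prod.fst_swap, Prod.snd_swap,
    forall_and]
  tauto

def evaluationMatrix (n : ℕ) {ι : Type*} (p : ι → Point) :
    Matrix ι (Fin 2 × Fin (n + 1)) ℂ :=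
  Matrix.of fun t x => eval (coords (p t)) (bidegreeMonomial n x)

lemma finrank_symmetricSystemWithPoints (n : ℕ) {m r : ℕ} (z : Fin m → Point)
    (w : Fin r → Point) :
    finrank ℂ (symmetricSystemWithPoints n z w) =
      2 * (n + 1) - (evaluationMatrix n (interpolationPoints z w)).rank := by
  rw [symmetricSystemWithPoints_eq, finrank_inf_iInf_ker_eq_card_sub_rank _ (bidegreeBasis n)]
  simp [evaluationMatrix, coe_bidegreeBasis]

def expectedRank (n m r : ℕ) : ℕ := min (2 * m + r) (2 * (n + 1))

lemma expectedRank_le_card (n m r : ℕ) : expectedRank n m r ≤ m + r + m := by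
  unfold expectedRank; omega

lemma expectedRank_le_dim (n m r : ℕ) : expectedRank n m r ≤ 2 * (n + 1) :=
  min_le_right _ _

-- In the order of `interpolationPoints`, the first rows use as few reflected points as possible.
def leadingMinor {R : Type*} (n m r : ℕ)
    (A : Matrix (Fin (m + r + m)) (Fin 2 × Fin (n + 1)) R) :
    Matrix (Fin (expectedRank n m r)) (Fin (expectedRank n m r)) R :=
  A.submatrix (Fin.castLE (expectedRank_le_card n m r))
    (finProdFinEquiv.symm ∘ Fin.castLE (expectedRank_le_dim n m r))

lemma rank_evaluationMatrix_eq_expectedRank (n : ℕ) {m r : ℕ} (z : Fin m → Point)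
    (w : Fin r → Point)
    (h : (leadingMinor n m r (evaluationMatrix n (interpolationPoints z w))).det ≠ 0) :
    (evaluationMatrix n (interpolationPoints z w)).rank = expectedRank n m r :=
  Matrix.rank_eq_of_det_submatrix_ne_zero _ _ _ h (by simp [expectedRank]; omega)

abbrev Configuration (m r : ℕ) := (Fin m ⊕ Fin r) × (Fin 2 ⊕ Fin 2)

-- Definitionally the valuation in the statement of the theorem.
def configuration {m r : ℕ} (z : Fin m → Point) (w : Fin r → Point) :
    Configuration m r → ℂ :=
  fun p => Sum.elim (fun i => coords (z i) p.2) (fun j => coords (w j) p.2) p.1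

def genericPoints (m r : ℕ) :
    Fin (m + r + m) → Fin 2 ⊕ Fin 2 → MvPolynomial (Configuration m r) ℂ :=
  Fin.append (Fin.append (fun i v => X (Sum.inl i, v)) (fun j v => X (Sum.inr j, v)))
    (fun i v => X (Sum.inl i, Sum.swap v))

lemma eval_genericPoints {m r : ℕ} (z : Fin m → Point) (w : Fin r → Point)
    (t : Fin (m + r + m)) (v : Fin 2 ⊕ Fin 2) :
    eval (configuration z w) (genericPoints m r t v) = coords (interpolationPoints z w t) v := by
  induction t using Fin.addCases with
  | left t =>
    induction t using Fin.addCases <;>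
      simp [genericPoints, interpolationPoints, configuration]
  | right i => simp [genericPoints, interpolationPoints, configuration, coords_swap]

def minorPolynomial (n m r : ℕ) : MvPolynomial (Configuration m r) ℂ :=
  (leadingMinor n m r
    (Matrix.of fun t x => bind₁ (genericPoints m r t) (bidegreeMonomial n x))).det

lemma eval_minorPolynomial (n : ℕ) {m r : ℕ} (z : Fin m → Point) (w : Fin r → Point) :
    eval (configuration z w) (minorPolynomial n m r) =
      (leadingMinor n m r (evaluationMatrix n (interpolationPoints z w))).det := by
  rw [minorPolynomial, RingHom.map_det]
  congr 1
  ext i j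
  simp only [RingHom.mapMatrix_apply, Matrix.map_apply, leadingMinor, Matrix.submatrix_apply,
    Matrix.of_apply, evaluationMatrix]
  exact (eval₂Hom_bind₁ _ _ _ _).trans
    (congrArg (fun f => MvPolynomial.eval f _) (funext (eval_genericPoints z w _)))

def curvePoint (n : ℕ) (t : ℂ) : Point := (![1, t ^ (n + 1)], ![1, t])

lemma eval_curvePoint (n : ℕ) (t : ℂ) (x : Fin 2 × Fin (n + 1)) :
    eval (coords (curvePoint n t)) (bidegreeMonomial n x) = t ^ (finProdFinEquiv x : ℕ) := by
  obtain ⟨e, j⟩ := x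
  fin_cases e <;> simp [coords, curvePoint, eval_bidegreeMonomial, pow_add, mul_comm]

lemma eval_bidegreeMonomial_zero (a : ℂ) (v : Fin 2 → ℂ) (x : Fin 2 × Fin 1) :
    eval (coords (![1, a], v)) (bidegreeMonomial 0 x) = a ^ (finProdFinEquiv x : ℕ) := by
  obtain ⟨e, j⟩ := x
  rw [finProdFinEquiv_apply_val, Fin.fin_one_eq_zero j]
  fin_cases e <;> simp [coords, eval_bidegreeMonomial]

lemma det_leadingMinor_ne_zero_of_eval_eq_pow (n : ℕ) {m r : ℕ} {p : Fin (m + r + m) → Point}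
    {τ : ℕ → ℂ} (hτ : Function.Injective τ)
    (hrow : ∀ t : Fin (m + r + m), (t : ℕ) < expectedRank n m r → ∀ x,
      eval (coords (p t)) (bidegreeMonomial n x) = τ t ^ (finProdFinEquiv x : ℕ)) :
    (leadingMinor n m r (evaluationMatrix n p)).det ≠ 0 := by
  have hvandermonde : leadingMinor n m r (evaluationMatrix n p) =
      Matrix.vandermonde fun i => τ i := by
    ext i j
    simp only [leadingMinor, evaluationMatrix, Matrix.submatrix_apply, Matrix.of_apply,
      Function.comp_apply, Matrix.vandermonde_apply]
    rw [hrow _ i.isLt, Equiv.apply_symm_apply]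
    rfl
  rw [hvandermonde, Matrix.det_vandermonde_ne_zero_iff]
  exact hτ.comp Fin.val_injective

lemma exists_det_leadingMinor_ne_zero_of_eq_zero (m r : ℕ) :
    ∃ (z : Fin m → Point) (w : Fin r → Point),
      (leadingMinor 0 m r (evaluationMatrix 0 (interpolationPoints z w))).det ≠ 0 := by
  refine ⟨fun i => (![1, ((2 + i : ℕ) : ℂ)], ![1, ((2 + (m + r + i) : ℕ) : ℂ)]),
    fun j => curvePoint 0 ((2 + (m + j) : ℕ) : ℂ),
    det_leadingMinor_ne_zero_of_eval_eq_pow 0 (τ := fun t => ((2 + t : ℕ) : ℂ))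
      (fun _ _ h => by simpa using h) fun t _ x => ?_⟩
  induction t using Fin.addCases with
  | left t =>
    induction t using Fin.addCases <;>
      simp [interpolationPoints, eval_bidegreeMonomial_zero, eval_curvePoint]
  | right i => simp [interpolationPoints, eval_bidegreeMonomial_zero]

-- The number of reflected points `zᵢ′` among the rows of `leadingMinor`.
def fullPairs (n m r : ℕ) : ℕ := expectedRank n m r - (m + r)

def cycleSucc (n k : ℕ) : ℕ := if k < n then k + 1 else 0

def pairExponent (n m r t : ℕ) : Option ℕ :=
  if t < fullPairs n m r then some ((n + 1) * t + cycleSucc n t)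
  else if m + r ≤ t ∧ t < m + r + fullPairs n m r then
    some ((n + 1) * cycleSucc n (t - (m + r)) + (t - (m + r)))
  else none

lemma fullPairs_le (n m r : ℕ) : fullPairs n m r ≤ n + 1 ∧ fullPairs n m r ≤ m := by
  unfold fullPairs expectedRank; omega

lemma cycleSucc_le (n k : ℕ) : cycleSucc n k ≤ n := by
  unfold cycleSucc; split_ifs <;> omega

lemma mul_add_lt_of_ne {n a b : ℕ} (ha : a ≤ n) (hb : b ≤ n) (hab : a ≠ b) :
    (n + 1) * a + b < n * (n + 2) := by
  rcases Nat.lt_or_ge a n with ha' | ha'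
  · nlinarith
  · nlinarith [show a = n by omega, show b < n by omega]

lemma pairExponent_lt {n m r t e : ℕ} (hn : 0 < n) (h : pairExponent n m r t = some e) :
    e < n * (n + 2) := by
  have := fullPairs_le n m r
  unfold pairExponent at h
  split_ifs at h <;> cases h <;> apply mul_add_lt_of_ne <;>
    first | omega | (unfold cycleSucc; split_ifs <;> omega)

lemma eq_of_pairExponent_eq_some {n m r t t' e : ℕ} (hn : 0 < n) (hnm : (n, m) ≠ (1, 2))
    (h : pairExponent n m r t = some e) (h' : pairExponent n m r t' = some e) : t = t' := by
  have hnm' : n ≠ 1 ∨ m ≠ 2 := by rwa [Ne, Prod.mk.injEq, not_and_or] at hnm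
  have hfull : n = 1 → m ≠ 2 → fullPairs n m r ≤ 1 := by
    unfold fullPairs expectedRank; omega
  have := fullPairs_le n m r
  have := cycleSucc_le n t
  have := cycleSucc_le n (t - (m + r))
  have := cycleSucc_le n t'
  have := cycleSucc_le n (t' - (m + r))
  unfold pairExponent at h h'
  split_ifs at h h' <;> simp only [Option.some.injEq] at h h' <;>
    obtain ⟨h1, h2⟩ :=
      Nat.eq_and_eq_of_mul_add_eq_mul_add (by omega) (by omega) (h.trans h'.symm) <;>
    simp only [cycleSucc] at h1 h2 <;> split_ifs at h1 h2 <;> omega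

def witnessParam (ζ : ℂ) (n m r t : ℕ) : ℂ :=
  (pairExponent n m r t).elim ((2 + t : ℕ) : ℂ) (ζ ^ ·)

lemma witnessParam_injective {ζ : ℂ} {n m r : ℕ} (hζ : IsPrimitiveRoot ζ (n * (n + 2)))
    (hn : 0 < n) (hnm : (n, m) ≠ (1, 2)) : Function.Injective (witnessParam ζ n m r) := by
  have hN : n * (n + 2) ≠ 0 := by positivity
  have hroot_ne_real : ∀ e t : ℕ, ζ ^ e ≠ ((2 + t : ℕ) : ℂ) := fun e t h => by
    have := congrArg norm h
    rw [norm_pow, hζ.norm'_eq_one hN, one_pow, Complex.norm_natCast] at this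
    norm_cast at this
    omega
  intro t t' h
  unfold witnessParam at h
  cases ht : pairExponent n m r t <;> cases ht' : pairExponent n m r t' <;>
    simp only [ht, ht', Option.elim_none, Option.elim_some] at h
  · have : 2 + t = 2 + t' := by exact_mod_cast h
    omega
  · exact absurd h.symm (hroot_ne_real _ _)
  · exact absurd h (hroot_ne_real _ _)
  · rename_i e e'
    have he : e = e' := hζ.pow_inj (pairExponent_lt hn ht) (pairExponent_lt hn ht') h
    exact eq_of_pairExponent_eq_some hn hnm ht (he ▸ ht')

lemma pow_mul_add_pow_succ {ζ : ℂ} {n : ℕ} (hζ : ζ ^ (n * (n + 2)) = 1) (x y : ℕ) :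
    (ζ ^ ((n + 1) * x + y)) ^ (n + 1) = ζ ^ ((n + 1) * y + x) := by
  rw [← pow_mul, show ((n + 1) * x + y) * (n + 1) = n * (n + 2) * x + ((n + 1) * y + x) by ring,
    pow_add, pow_mul, hζ, one_pow, one_mul]

lemma swap_curvePoint_pow {ζ : ℂ} {n : ℕ} (hζ : ζ ^ (n * (n + 2)) = 1) (x y : ℕ) :
    (curvePoint n (ζ ^ ((n + 1) * x + y))).swap = curvePoint n (ζ ^ ((n + 1) * y + x)) := by
  simp [curvePoint, pow_mul_add_pow_succ hζ]

lemma exists_det_leadingMinor_ne_zero_of_pos {n : ℕ} (m r : ℕ) (hn : 0 < n)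
    (hnm : (n, m) ≠ (1, 2)) :
    ∃ (z : Fin m → Point) (w : Fin r → Point),
      (leadingMinor n m r (evaluationMatrix n (interpolationPoints z w))).det ≠ 0 := by
  set ζ := Complex.exp (2 * Real.pi * Complex.I / ↑(n * (n + 2)))
  have hζ : IsPrimitiveRoot ζ (n * (n + 2)) := Complex.isPrimitiveRoot_exp _ (by positivity)
  set τ := witnessParam ζ n m r
  refine ⟨fun i => curvePoint n (τ i), fun j => curvePoint n (τ (m + j)),
    det_leadingMinor_ne_zero_of_eval_eq_pow n (witnessParam_injective (r := r) hζ hn hnm)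
      fun t ht x => ?_⟩
  induction t using Fin.addCases with
  | left t =>
    induction t using Fin.addCases <;> simp [interpolationPoints, eval_curvePoint, τ]
  | right i =>
    have hi : (i : ℕ) < fullPairs n m r := by
      simp only [Fin.val_natAdd] at ht; unfold fullPairs; omega
    have hfull := fullPairs_le n m r
    have hz : τ i = ζ ^ ((n + 1) * i + cycleSucc n i) := by
      simp [τ, witnessParam, pairExponent, hi]
    have hz' : τ (m + r + i) = ζ ^ ((n + 1) * cycleSucc n i + i) := by
      simp [τ, witnessParam, pairExponent, hi, show ¬ (m + r + i < fullPairs n m r) by omega]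
    simp only [interpolationPoints, Fin.append_right, Function.comp_apply, Fin.val_natAdd]
    rw [hz, swap_curvePoint_pow hζ.pow_eq_one, eval_curvePoint]
    exact congrArg (· ^ _) hz'.symm

lemma minorPolynomial_ne_zero {n m : ℕ} (r : ℕ) (hnm : (n, m) ≠ (1, 2)) :
    minorPolynomial n m r ≠ 0 := by
  obtain ⟨z, w, hdet⟩ : ∃ (z : Fin m → Point) (w : Fin r → Point),
      (leadingMinor n m r (evaluationMatrix n (interpolationPoints z w))).det ≠ 0 := by
    rcases Nat.eq_zero_or_pos n with rfl | hn
    · exact exists_det_leadingMinor_ne_zero_of_eq_zero m r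
    · exact exists_det_leadingMinor_ne_zero_of_pos m r hn hnm
  intro h
  rw [← eval_minorPolynomial, h, map_zero] at hdet
  exact hdet rfl

end BidegreeInterpolation

open BidegreeInterpolation

/-- For `(n,m) ≠ (1,2)`, `m` general symmetric pairs
`z₁, z₁′, …, z_m, z_m′` of points of `ℙ¹ × ℙ¹` and `r` further general points, the
linear system of divisors in `|𝒪(1,n)|` through all of these points has the
expected projective dimension `max (−1) (2n + 1 − 2m − r)`, i.e. the space of forms
of bidegree `(1,n)` vanishing at the points has vector space dimension
`max 0 (2n + 2 − 2m − r)`. -/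
theorem symmetric_interpolation_dimension_extra_points (n m r : ℕ)
    (hnm : (n, m) ≠ (1, 2)) :
    ∃ F : MvPolynomial ((Fin m ⊕ Fin r) × (Fin 2 ⊕ Fin 2)) ℂ, F ≠ 0 ∧
      ∀ (z : Fin m → ((Fin 2 → ℂ) × (Fin 2 → ℂ)))
        (w : Fin r → ((Fin 2 → ℂ) × (Fin 2 → ℂ))),
        (∀ i, (z i).1 ≠ 0 ∧ (z i).2 ≠ 0) →
        (∀ j, (w j).1 ≠ 0 ∧ (w j).2 ≠ 0) →
        MvPolynomial.eval
          (fun p => Sum.elim (fun i => Sum.elim (z i).1 (z i).2 p.2)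
            (fun j => Sum.elim (w j).1 (w j).2 p.2) p.1) F ≠ 0 →
        (Module.finrank ℂ ↥(symmetricSystemWithPoints n z w) : ℤ) =
          max 0 (2 * (n : ℤ) + 2 - 2 * (m : ℤ) - (r : ℤ)) := by
  refine ⟨minorPolynomial n m r, minorPolynomial_ne_zero r hnm, fun z w _ _ hF => ?_⟩
  have hrank := rank_evaluationMatrix_eq_expectedRank n z w (eval_minorPolynomial n z w ▸ hF)
  rw [finrank_symmetricSystemWithPoints, hrank, expectedRank]
  omega

end
end
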